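/- Let L be a finitely generated abelian group and let π : L → L ⊗_ℤ ℝ be the canonical map x ↦ x ⊗ 1. Let M be a finitely generated submonoid of L that generates L as a group. Then there exists an element m ∈ M such that every x ∈ L with π(x) ∈ π(m) + cone(π(M)) belongs to M; that is, π^{-1}(π(m) + cone(π(M))) ⊆ M. (Lemma 4.1 of the paper, a higher-dimensional analogue of the Frobenius coin problem.) -/

import Mathlib

/-! Give `L` free coordinates `g : L →+ ℝʳ` with finite fibres over bounded sets, and let `mᵢ`
generate `M`. The `y ∈ L` with `g y` in the parallelepiped spanned by the `g mᵢ` form a finite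
set `F`, and since `M` generates `L` as a group a single `m₀ ∈ M` satisfies `F + m₀ ⊆ M`.
If `π x ∈ π m₀ + cone(π M)`, then `g x - g m₀ = ∑ μᵢ • g mᵢ` with `μᵢ ≥ 0`, and
`x - m₀ - ∑ ⌊μᵢ⌋ • mᵢ` lies in `F`; hence `x ∈ F + m₀ + M ⊆ M`. -/

open scoped TensorProduct

noncomputable section

/-- The convex cone generated by a subset `S` of a real vector space:
all finite sums `∑ λ_j • s_j` with `λ_j ∈ ℝ_{≥0}` and `s_j ∈ S`. -/
def coneGen {V : Type*} [AddCommGroup V] [Module ℝ V] (S : Set V) : Set V :=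
  {x | ∃ (k : ℕ) (lam : Fin k → ℝ) (s : Fin k → V),
    (∀ j, 0 ≤ lam j) ∧ (∀ j, s j ∈ S) ∧ x = ∑ j, lam j • s j}

open Set
open scoped NNReal DirectSum

theorem isCompact_parallelepiped {ι E : Type*} [Fintype ι] [NormedAddCommGroup E]
    [NormedSpace ℝ E] (v : ι → E) : IsCompact (parallelepiped v) :=
  isCompact_Icc.image (by fun_prop)

theorem AddGroup.FG.exists_addMonoidHom_finite_preimage_of_isBounded (L : Type*)
    [AddCommGroup L] [AddGroup.FG L] :
    ∃ (r : ℕ) (g : L →+ (Fin r → ℝ)), ∀ B, Bornology.IsBounded B → (g ⁻¹' B).Finite := by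
  obtain ⟨r, ι, _, p, hp, n, ⟨e⟩⟩ := AddCommGroup.equiv_free_prod_directSum_zmod L
  have : ∀ i, NeZero (p i ^ n i) := fun i => ⟨pow_ne_zero _ (hp i).ne_zero⟩
  have : Finite (⨁ i, ZMod (p i ^ n i)) := Finite.of_injective _ DFunLike.coe_injective
  let h : (Fin r →₀ ℤ) →+ (Fin r → ℝ) :=
    ((Int.castAddHom ℝ).compLeft (Fin r)).comp Finsupp.coeFnAddHom
  have happ : ∀ a j, h a j = a j := fun _ _ => rfl
  refine ⟨r, h.comp ((AddMonoidHom.fst _ _).comp e.toAddMonoidHom), fun B hB => ?_⟩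
  have hh : Function.Injective h := fun a b hab =>
    Finsupp.ext fun j => by simpa [happ] using congrFun hab j
  have hfin : (h ⁻¹' B).Finite := by
    refine ((ZSpan.setFinite_inter (Pi.basisFun ℝ (Fin r)) hB).preimage hh.injOn).subset
      fun a ha => ⟨ha, ?_⟩
    rw [SetLike.mem_coe, Module.Basis.mem_span_iff_repr_mem]
    exact fun j => ⟨a j, (happ a j).symm⟩
  exact ((hfin.prod finite_univ).preimage e.injective.injOn).subset fun y hy => ⟨hy, trivial⟩

section Frobenius

variable {L V ι : Type*} [AddCommGroup L] [AddCommGroup V] [Module ℝ V]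

theorem AddSubmonoid.exists_add_mem_of_closure_eq_top {M : AddSubmonoid L}
    (hM : AddSubgroup.closure (M : Set L) = ⊤) (y : L) : ∃ b ∈ M, y + b ∈ M := by
  have hy : y ∈ AddSubgroup.closure (M : Set L) := hM ▸ AddSubgroup.mem_top y
  induction hy using AddSubgroup.closure_induction with
  | mem z hz => exact ⟨0, M.zero_mem, by rwa [add_zero]⟩
  | zero => exact ⟨0, M.zero_mem, by simp⟩
  | add a b _ _ iha ihb =>
    obtain ⟨u, hu, hau⟩ := iha
    obtain ⟨v, hv, hbv⟩ := ihb
    exact ⟨u + v, M.add_mem hu hv, by simpa [add_add_add_comm] using M.add_mem hau hbv⟩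
  | neg a _ iha =>
    obtain ⟨u, hu, hau⟩ := iha
    exact ⟨a + u, hau, by simpa⟩

theorem AddSubmonoid.exists_forall_add_mem_of_closure_eq_top {M : AddSubmonoid L}
    (hM : AddSubgroup.closure (M : Set L) = ⊤) {F : Set L} (hF : F.Finite) :
    ∃ m₀ ∈ M, ∀ y ∈ F, y + m₀ ∈ M := by
  induction F, hF using Set.Finite.induction_on with
  | empty => exact ⟨0, M.zero_mem, by simp⟩
  | @insert a F _ _ ih =>
    obtain ⟨m₀, hm₀, hF⟩ := ih
    obtain ⟨b, hb, hab⟩ := M.exists_add_mem_of_closure_eq_top hM (a + m₀)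
    refine ⟨m₀ + b, M.add_mem hm₀ hb, ?_⟩
    rintro y (rfl | hy)
    · rwa [← add_assoc]
    · rw [← add_assoc]
      exact M.add_mem (hF y hy) hb

theorem sum_smul_sub_sum_floor_nsmul_mem_parallelepiped [Fintype ι] (v : ι → V) (μ : ι → ℝ≥0) :
    ∑ i, μ i • v i - ∑ i, ⌊μ i⌋₊ • v i ∈ parallelepiped v := by
  rw [mem_parallelepiped_iff]
  refine ⟨fun i => μ i - ⌊μ i⌋₊, ⟨fun i => ?_, fun i => ?_⟩, ?_⟩
  · simpa using NNReal.coe_le_coe.2 (Nat.floor_le (μ i).2)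
  · have := NNReal.coe_lt_coe.2 (Nat.lt_floor_add_one (μ i))
    push_cast at this
    simp only [Pi.one_apply]
    linarith
  · simp [sub_smul, Finset.sum_sub_distrib, NNReal.smul_def, Nat.cast_smul_eq_nsmul]

theorem coneGen_subset_span_nnreal (S : Set V) : coneGen S ⊆ Submodule.span ℝ≥0 S := by
  rintro _ ⟨k, lam, s, hlam, hs, rfl⟩
  exact Submodule.sum_mem _ fun j _ =>
    Submodule.smul_mem _ (⟨lam j, hlam j⟩ : ℝ≥0) (Submodule.subset_span (hs j))

theorem AddSubmonoid.exists_forall_mem_of_sub_mem_span [Fintype ι] {M : AddSubmonoid L}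
    (hM : AddSubgroup.closure (M : Set L) = ⊤) {m : ι → L} (hm : ∀ i, m i ∈ M) (g : L →+ V)
    (hfin : (g ⁻¹' parallelepiped (g ∘ m)).Finite) :
    ∃ m₀ ∈ M, ∀ x, g x - g m₀ ∈ Submodule.span ℝ≥0 (range (g ∘ m)) → x ∈ M := by
  obtain ⟨m₀, hm₀, hF⟩ := M.exists_forall_add_mem_of_closure_eq_top hM hfin
  refine ⟨m₀, hm₀, fun x hx => ?_⟩
  obtain ⟨μ, hμ⟩ := (Submodule.mem_span_range_iff_exists_fun ℝ≥0).1 hx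
  set y := x - m₀ - ∑ i, ⌊μ i⌋₊ • m i
  have hy : g y ∈ parallelepiped (g ∘ m) := by
    convert sum_smul_sub_sum_floor_nsmul_mem_parallelepiped (g ∘ m) μ using 1
    simp only [y, map_sub, map_sum, map_nsmul, ← hμ, Function.comp_apply]
  have hx : x = (y + m₀) + ∑ i, ⌊μ i⌋₊ • m i := by simp only [y]; abel
  rw [hx]
  exact M.add_mem (hF y hy) (M.sum_mem fun i _ => M.nsmul_mem (hm i) _)

theorem liftBaseChange_mem_span_of_mem_coneGen (g : L →+ V) (m : ι → L) {c : ℝ ⊗[ℤ] L}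
    (hc : c ∈ coneGen ((fun y : L => (1 : ℝ) ⊗ₜ[ℤ] y) '' AddSubmonoid.closure (range m))) :
    g.toIntLinearMap.liftBaseChange ℝ c ∈ Submodule.span ℝ≥0 (range (g ∘ m)) := by
  let Φ := (g.toIntLinearMap.liftBaseChange ℝ).restrictScalars ℝ≥0
  have hM : AddSubmonoid.closure (range m) ≤
      (Submodule.span ℝ≥0 (range (g ∘ m))).toAddSubmonoid.comap g :=
    AddSubmonoid.closure_le.2 (range_subset_iff.2 fun i => Submodule.subset_span ⟨i, rfl⟩)
  have hspan : Submodule.span ℝ≥0 ((fun y : L => (1 : ℝ) ⊗ₜ[ℤ] y) ''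
      AddSubmonoid.closure (range m)) ≤ (Submodule.span ℝ≥0 (range (g ∘ m))).comap Φ :=
    Submodule.span_le.2 (by rintro _ ⟨y, hy, rfl⟩; simpa [Φ] using hM hy)
  exact hspan (coneGen_subset_span_nnreal _ hc)

end Frobenius

/-- Lemma 4.1 of the paper, a higher-dimensional Frobenius coin
problem: if `L` is a finitely generated abelian group, `π : L → L ⊗_ℤ ℝ` the
canonical map `x ↦ x ⊗ 1` (here realised, via the canonical isomorphism
`L ⊗_ℤ ℝ ≃ ℝ ⊗_ℤ L`, as `x ↦ 1 ⊗ x` so that the target carries its real vector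
space structure), and `M` a finitely generated submonoid of `L` generating `L`
as a group, then there is `m ∈ M` with `π⁻¹(π(m) + cone(π(M))) ⊆ M`. -/
theorem frobenius_coin_lemma
    (L : Type*) [AddCommGroup L] [AddGroup.FG L]
    (M : AddSubmonoid L) (hfg : M.FG)
    (hgen : AddSubgroup.closure (M : Set L) = ⊤) :
    ∃ m ∈ M, ∀ x : L,
      (∃ c ∈ coneGen ((fun y : L => (1 : ℝ) ⊗ₜ[ℤ] y) '' (M : Set L)),
        ((1 : ℝ) ⊗ₜ[ℤ] x : ℝ ⊗[ℤ] L) = (1 : ℝ) ⊗ₜ[ℤ] m + c) → x ∈ M := by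
  obtain ⟨S, rfl⟩ := hfg
  obtain ⟨r, g, hg⟩ := AddGroup.FG.exists_addMonoidHom_finite_preimage_of_isBounded L
  have hS : range ((↑) : S → L) = S := Subtype.range_coe
  obtain ⟨m₀, hm₀, hmem⟩ := AddSubmonoid.exists_forall_mem_of_sub_mem_span hgen
    (m := ((↑) : S → L)) (fun i => AddSubmonoid.subset_closure i.2) g
    (hg _ (isCompact_parallelepiped _).isBounded)
  refine ⟨m₀, hm₀, fun x ⟨c, hc, hx⟩ => hmem x ?_⟩
  have hΦ : g x - g m₀ = g.toIntLinearMap.liftBaseChange ℝ c := by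
    simpa [sub_eq_iff_eq_add'] using congrArg (g.toIntLinearMap.liftBaseChange ℝ) hx
  rw [hΦ]
  exact liftBaseChange_mem_span_of_mem_coneGen g _ (by rwa [hS])
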